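/- Let k be a nonnegative integer, let a ∈ (0,2) be a real number that is not an integer, and let b be any real number. Then the series ∑_{n≥0} Γ(a+n−2−2k) · (1/2 − n)_k · (1−b−n)_k / n! converges absolutely and its sum equals 0. -/

import Mathlib

/-!
With `c = a - 2 - 2k` one has `Γ(a + n - 2 - 2k) = Γ(c) (c)_n`, so the series is
`Γ(c) ∑ (c)_n P(n) / n!` for a polynomial `P` of degree at most `2k`, and `c + 2k = a - 2 < 0`.
The series telescopes: since `c` is not an integer, the operator
`Q ↦ (X + c) Q(X + 1) - (X + 1) Q` is injective, hence bijective on polynomials of degree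
`≤ 2k + 1`, so some `Q` with `Q(0) = 0` is sent to `(X + 1) P`, and then the `N`-th partial sum
equals `(c)_N Q(N) / N!`. Euler's limit for `Γ` gives `(c)_n / n! = O(n^(c-1))`,
so this is `O(n^(a-2)) → 0`, and the terms themselves are `O(n^(a-3))`, which is summable.
-/

/-- Pochhammer symbol (rising factorial) for a real argument. -/
noncomputable def poch (x : ℝ) (n : ℕ) : ℝ := (ascPochhammer ℝ n).eval x

open Polynomial Filter Asymptotics Topology

namespace Polynomial

theorem degree_taylor_sub_lt {R : Type*} [CommRing R] (r : R) {p : R[X]} {n : ℕ}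
    (hp : p.natDegree ≤ n) : (taylor r p - p).degree < n := by
  rw [degree_lt_iff_coeff_zero]
  intro i hi
  rw [coeff_sub]
  rcases (hp.trans hi).lt_or_eq with h | h
  · rw [coeff_eq_zero_of_natDegree_lt h,
      coeff_eq_zero_of_natDegree_lt (by rwa [natDegree_taylor]), sub_zero]
  · rw [← h, coeff_taylor_natDegree, sub_eq_zero, leadingCoeff]

theorem mem_degreeLT_add_one_iff {R : Type*} [Semiring R] {n : ℕ} {p : R[X]} :
    p ∈ degreeLT R (n + 1) ↔ p.natDegree ≤ n := by
  rw [degreeLT_succ_eq_degreeLE, mem_degreeLE, natDegree_le_iff_degree_le]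

section PochShift

variable {K : Type*} [Field K]

/-- If `pochShift c q = (X + 1) * p`, then `n ↦ (c)_n q(n) / n!` is a primitive of
`n ↦ (c)_n p(n) / n!` (see `pochTerm_succ_sub`). -/
noncomputable def pochShift (c : K) : K[X] →ₗ[K] K[X] :=
  LinearMap.mulLeft K (X + C c) ∘ₗ (taylor 1 : K[X] →ₗ[K] K[X]) - LinearMap.mulLeft K (X + 1)

theorem pochShift_apply (c : K) (q : K[X]) :
    pochShift c q = (X + C c) * taylor 1 q - (X + 1) * q := rfl

theorem eval_pochShift (c : K) (q : K[X]) (x : K) :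
    (pochShift c q).eval x = (x + c) * q.eval (x + 1) - (x + 1) * q.eval x := by
  simp [pochShift_apply, taylor_eval]

theorem pochShift_mem_degreeLT (c : K) {n : ℕ} {q : K[X]} (hq : q ∈ degreeLT K (n + 1)) :
    pochShift c q ∈ degreeLT K (n + 1) := by
  rw [mem_degreeLT_add_one_iff] at hq
  have hsplit : pochShift c q = (X + C c) * (taylor 1 q - q) + C (c - 1) * q := by
    rw [pochShift_apply, C_sub, C_1]; ring
  rw [hsplit]
  refine Submodule.add_mem _ ?_ (mem_degreeLT_add_one_iff.mpr ((natDegree_C_mul_le _ _).trans hq))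
  rw [mem_degreeLT]
  calc ((X + C c) * (taylor 1 q - q)).degree
      ≤ 1 + (taylor 1 q - q).degree := by
        rw [← degree_X_add_C c]; exact degree_mul_le _ _
    _ < 1 + n := WithBot.add_lt_add_left WithBot.one_ne_bot (degree_taylor_sub_lt 1 hq)
    _ = ↑(n + 1) := by push_cast; ring

variable [CharZero K]

/-- A kernel element `q` satisfies `(x + c) q(x + 1) = (x + 1) q(x)`, which forces `q(0) = 0`
(at `x = -1`) and then `q(n) = 0` for every natural `n`. -/
theorem pochShift_injective {c : K} (hc1 : c ≠ 1) (hc : ∀ j : ℕ, c + j ≠ 0) :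
    Function.Injective (pochShift c) := by
  rw [← LinearMap.ker_eq_bot, LinearMap.ker_eq_bot']
  intro q hq
  have hrec (x : K) : (x + c) * q.eval (x + 1) = (x + 1) * q.eval x := by
    rw [← sub_eq_zero, ← eval_pochShift, hq, eval_zero]
  have hroot (n : ℕ) : q.eval (n : K) = 0 := by
    induction n with
    | zero =>
      have h := hrec (-1)
      rw [neg_add_cancel, zero_mul, mul_eq_zero] at h
      exact_mod_cast h.resolve_left fun h' => hc1 (neg_add_eq_zero.mp h').symm
    | succ n ih =>
      have h := hrec n
      rw [ih, mul_zero, add_comm] at h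
      exact_mod_cast (mul_eq_zero.mp h).resolve_left (hc n)
  exact eq_zero_of_infinite_isRoot q
    ((Set.infinite_range_of_injective Nat.cast_injective).mono
      (by rintro _ ⟨n, rfl⟩; exact hroot n))

theorem exists_pochShift_eq {c : K} (hc1 : c ≠ 1) (hc : ∀ j : ℕ, c + j ≠ 0) {n : ℕ} {f : K[X]}
    (hf : f.natDegree ≤ n) : ∃ q : K[X], q.natDegree ≤ n ∧ pochShift c q = f := by
  let T : degreeLT K (n + 1) →ₗ[K] degreeLT K (n + 1) :=
    (pochShift c).restrict fun _ => pochShift_mem_degreeLT c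
  have hT : Function.Surjective T := LinearMap.injective_iff_surjective.mp fun q₁ q₂ h =>
    Subtype.ext (pochShift_injective hc1 hc (congrArg Subtype.val h))
  obtain ⟨⟨q, hq⟩, hTq⟩ := hT ⟨f, mem_degreeLT_add_one_iff.mpr hf⟩
  exact ⟨q, mem_degreeLT_add_one_iff.mp hq, congrArg Subtype.val hTq⟩

end PochShift

theorem eval_natCast_isBigO {p : ℝ[X]} {d : ℕ} (hp : p.natDegree ≤ d) :
    (fun n : ℕ => p.eval (n : ℝ)) =O[atTop] fun n : ℕ => (n : ℝ) ^ d := by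
  have h := isBigO_atTop_of_degree_le p (X ^ d) (by
    rw [degree_X_pow]; exact degree_le_of_natDegree_le hp)
  simpa only [eval_pow, eval_X, Function.comp_def] using h.comp_tendsto tendsto_natCast_atTop_atTop

theorem natDegree_ascPochhammer_comp_C_sub_X (u : ℝ) (k : ℕ) :
    ((ascPochhammer ℝ k).comp (C u - X)).natDegree = k := by
  rw [natDegree_comp, ascPochhammer_natDegree, ← neg_sub, natDegree_neg, natDegree_X_sub_C,
    mul_one]

end Polynomial

theorem poch_zero (x : ℝ) : poch x 0 = 1 := by simp [poch]

theorem poch_succ (x : ℝ) (n : ℕ) : poch x (n + 1) = poch x n * (x + n) :=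
  ascPochhammer_succ_eval n x

theorem poch_eq_prod_range (x : ℝ) (n : ℕ) : poch x n = ∏ j ∈ Finset.range n, (x + j) := by
  induction n with
  | zero => simp [poch_zero]
  | succ n ih => rw [poch_succ, ih, Finset.prod_range_succ]

theorem Gamma_add_nat_eq_Gamma_mul_poch {c : ℝ} (hc : ∀ j : ℕ, c + j ≠ 0) (n : ℕ) :
    Real.Gamma (c + n) = Real.Gamma c * poch c n := by
  induction n with
  | zero => simp [poch_zero]
  | succ n ih =>
    rw [Nat.cast_succ, ← add_assoc, Real.Gamma_add_one (hc n), ih, poch_succ]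
    ring

/-- Euler's limit `GammaSeq c n = n^c n! / ((c)_n (c + n)) → Γ(c) ≠ 0`. -/
theorem poch_div_factorial_isBigO {c : ℝ} (hc : ∀ j : ℕ, c + j ≠ 0) :
    (fun n : ℕ => poch c n / n.factorial) =O[atTop] fun n : ℕ => (n : ℝ) ^ (c - 1) := by
  have hGamma : Real.Gamma c ≠ 0 := Real.Gamma_ne_zero fun m hm => hc m (by rw [hm]; ring)
  have hseq (n : ℕ) : Real.GammaSeq c n * (poch c n * (c + n)) = (n : ℝ) ^ c * n.factorial := by
    have hprod : poch c n * (c + n) ≠ 0 := by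
      rw [← poch_succ, poch_eq_prod_range]
      exact Finset.prod_ne_zero_iff.mpr fun j _ => hc j
    rw [Real.GammaSeq, poch_eq_prod_range, ← Finset.prod_range_succ, div_mul_cancel₀]
    rwa [poch_eq_prod_range, ← Finset.prod_range_succ] at hprod
  have hseq_inv : (fun n : ℕ => (Real.GammaSeq c n)⁻¹) =O[atTop] fun _ => (1 : ℝ) :=
    ((Real.GammaSeq_tendsto_Gamma c).inv₀ hGamma).isBigO_one ℝ
  have hlin_inv : (fun n : ℕ => ((n : ℝ) + c)⁻¹) =O[atTop] fun n : ℕ => (n : ℝ)⁻¹ := by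
    have hne : ∀ᶠ n : ℕ in atTop, (n : ℝ) + c ≠ 0 :=
      Eventually.of_forall fun n => by rw [add_comm]; exact hc n
    exact ((isEquivalent_iff_tendsto_one hne).mpr (tendsto_natCast_div_add_atTop c)).symm.inv.isBigO
  refine (((isBigO_refl (fun n : ℕ => (n : ℝ) ^ c) atTop).mul hseq_inv).mul hlin_inv).congr' ?_ ?_
  · filter_upwards [eventually_ge_atTop 1] with n hn
    have hpos : (0 : ℝ) < n := by exact_mod_cast hn
    have hfac : (n.factorial : ℝ) ≠ 0 := by positivity
    have hlin : (n : ℝ) + c ≠ 0 := by rw [add_comm]; exact hc n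
    have hGseq : Real.GammaSeq c n ≠ 0 := by
      intro h
      have h' := hseq n
      rw [h, zero_mul] at h'
      exact (mul_ne_zero (Real.rpow_pos_of_pos hpos c).ne' hfac) h'.symm
    field_simp
    linear_combination (hseq n).symm
  · filter_upwards [eventually_ge_atTop 1] with n hn
    have hpos : (0 : ℝ) < n := by exact_mod_cast hn
    rw [mul_one, Real.rpow_sub hpos, Real.rpow_one, div_eq_mul_inv]

noncomputable def pochTerm (c : ℝ) (p : ℝ[X]) (n : ℕ) : ℝ := poch c n * p.eval (n : ℝ) / n.factorial

theorem pochTerm_isBigO {c : ℝ} (hc : ∀ j : ℕ, c + j ≠ 0) {p : ℝ[X]} {d : ℕ}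
    (hp : p.natDegree ≤ d) : pochTerm c p =O[atTop] fun n : ℕ => (n : ℝ) ^ (c + d - 1) := by
  refine ((poch_div_factorial_isBigO hc).mul (eval_natCast_isBigO hp)).congr' ?_ ?_
  · exact Eventually.of_forall fun n => by rw [pochTerm]; ring
  · filter_upwards [eventually_ge_atTop 1] with n hn
    have hpos : (n : ℝ) ≠ 0 := by positivity
    rw [show c + d - 1 = c - 1 + d by ring, Real.rpow_add_natCast hpos]

theorem pochTerm_succ_sub {c : ℝ} {p q : ℝ[X]} (hq : pochShift c q = (X + 1) * p) (n : ℕ) :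
    pochTerm c q (n + 1) - pochTerm c q n = pochTerm c p n := by
  have h := congrArg (eval (n : ℝ)) hq
  rw [eval_pochShift, eval_mul, eval_add, eval_X, eval_one] at h
  have hfac : (n.factorial : ℝ) ≠ 0 := by positivity
  have hn : (n : ℝ) + 1 ≠ 0 := by positivity
  simp only [pochTerm, poch_succ, Nat.factorial_succ, Nat.cast_mul, Nat.cast_succ]
  field_simp
  linear_combination poch c n * h

theorem summable_abs_pochTerm {c : ℝ} (hc : ∀ j : ℕ, c + j ≠ 0) {p : ℝ[X]} {d : ℕ}
    (hp : p.natDegree ≤ d) (hcd : c + d < 0) : Summable fun n => |pochTerm c p n| := by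
  have h := (pochTerm_isBigO hc hp).norm_left
  simp only [Real.norm_eq_abs] at h
  exact summable_of_isBigO_nat (Real.summable_nat_rpow.mpr (by linarith)) h

theorem hasSum_pochTerm_zero {c : ℝ} (hc : ∀ j : ℕ, c + j ≠ 0) {p : ℝ[X]} {d : ℕ}
    (hp : p.natDegree ≤ d) (hcd : c + d < 0) : HasSum (pochTerm c p) 0 := by
  have hc1 : c ≠ 1 := by intro h; have : (0 : ℝ) ≤ d := d.cast_nonneg; linarith
  obtain ⟨q, hqd, hq⟩ := exists_pochShift_eq hc1 hc (n := d + 1) (f := (X + 1) * p) (by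
    refine natDegree_mul_le.trans ?_
    have : (X + 1 : ℝ[X]).natDegree ≤ 1 := by rw [← C_1, natDegree_X_add_C]
    omega)
  have hq0 : pochTerm c q 0 = 0 := by
    have h := congrArg (eval (-1 : ℝ)) hq
    rw [eval_pochShift, eval_mul, eval_add, eval_X, eval_one] at h
    have : q.eval 0 = 0 := by
      simpa [sub_eq_zero, hc1, show -1 + c ≠ 0 from fun h' => hc1 (by linarith)] using h
    simp [pochTerm, this]
  have hpartial (N : ℕ) : ∑ n ∈ Finset.range N, pochTerm c p n = pochTerm c q N := by
    simp only [← pochTerm_succ_sub hq, Finset.sum_range_sub, hq0, sub_zero]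
  have hlim : Tendsto (pochTerm c q) atTop (𝓝 0) := by
    refine (pochTerm_isBigO hc hqd).trans_tendsto ?_
    rw [show c + ((d + 1 : ℕ) : ℝ) - 1 = -(-(c + d)) by push_cast; ring]
    exact (tendsto_rpow_neg_atTop (by linarith)).comp tendsto_natCast_atTop_atTop
  rw [(summable_abs_pochTerm hc hp hcd).of_abs.hasSum_iff_tendsto_nat]
  simpa only [hpartial] using hlim

theorem stmt_8_general (k : ℕ) (a : ℝ) (ha2 : a < 2)
    (haInt : ∀ z : ℤ, a ≠ (z : ℝ)) (b : ℝ) :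
    Summable (fun n : ℕ =>
        |Real.Gamma (a + n - 2 - 2 * k) * poch (1 / 2 - n) k * poch (1 - b - n) k /
          (Nat.factorial n : ℝ)|) ∧
    (∑' n : ℕ,
        Real.Gamma (a + n - 2 - 2 * k) * poch (1 / 2 - n) k * poch (1 - b - n) k /
          (Nat.factorial n : ℝ)) = 0 := by
  set c := a - 2 - 2 * k
  have hc (j : ℕ) : c + j ≠ 0 := fun h => haInt (2 + 2 * k - j) (by push_cast; linarith)
  have hcd : c + (2 * k : ℕ) < 0 := by push_cast; linarith
  set P : ℝ[X] :=
    (ascPochhammer ℝ k).comp (C (1 / 2) - X) * (ascPochhammer ℝ k).comp (C (1 - b) - X)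
  have hP : P.natDegree ≤ 2 * k := by
    refine natDegree_mul_le.trans ?_
    rw [natDegree_ascPochhammer_comp_C_sub_X, natDegree_ascPochhammer_comp_C_sub_X]
    omega
  have hterm (n : ℕ) : Real.Gamma (a + n - 2 - 2 * k) * poch (1 / 2 - n) k *
      poch (1 - b - n) k / (Nat.factorial n : ℝ) = Real.Gamma c * pochTerm c P n := by
    rw [show a + n - 2 - 2 * k = c + n by ring, Gamma_add_nat_eq_Gamma_mul_poch hc]
    simp only [pochTerm, P, poch, eval_mul, eval_comp, eval_sub, eval_C, eval_X]
    ring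
  simp only [hterm]
  refine ⟨?_, ?_⟩
  · simpa only [abs_mul] using (summable_abs_pochTerm hc hP hcd).mul_left |Real.Gamma c|
  · rw [((hasSum_pochTerm_zero hc hP hcd).mul_left _).tsum_eq, mul_zero]

theorem stmt_8 (k : ℕ) (a : ℝ) (ha0 : 0 < a) (ha2 : a < 2)
    (haInt : ∀ z : ℤ, a ≠ (z : ℝ)) (b : ℝ) :
    Summable (fun n : ℕ =>
        |Real.Gamma (a + n - 2 - 2 * k) * poch (1 / 2 - n) k * poch (1 - b - n) k /
          (Nat.factorial n : ℝ)|) ∧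
    (∑' n : ℕ,
        Real.Gamma (a + n - 2 - 2 * k) * poch (1 / 2 - n) k * poch (1 - b - n) k /
          (Nat.factorial n : ℝ)) = 0 :=
  stmt_8_general k a ha2 haInt b
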